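/- arXiv:2104.02582 — 4 statements merged into one kernel-verified Lean document; each statement's English description precedes it below -/
import Mathlib

section
/- There exists N such that for every integer n ≥ N, the Mahler measure of the polynomial f_n(x) = x³ + n·x² − (n+3)·x + 1 satisfies M(f_n)² < 2·(n² + 3n + 9); in particular M(f_n) < n + 2 + 2/n + 1/n². -/
/-!
For `n > 0` the real cubic `fₙ` changes sign on `(-n-2, -1)`, on `(t⁻¹, 1)` and on `(1, 2)`,
where `t = n + 2 + 2/n + 1/n²`; the middle sign change holds because `t³ fₙ(t⁻¹)` is a rational
function of `n` with positive coefficients. So `fₙ` has three real roots `β < -1 < γ < 1 < δ`,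
and since `fₙ` is monic with `fₙ(0) = 1`, `M(fₙ) = |β δ| = 1/γ < t`. For `n ≥ 3` moreover
`t ≤ n + 3`, and `(n + 3)² < 2 (n² + 3n + 9)`.
-/

open Polynomial

/-- The Mahler measure of a complex polynomial `f = c ∏ (X - αᵢ)`:
`M(f) = |c| ∏_{|αᵢ| ≥ 1} |αᵢ|`. -/
noncomputable def mahlerMeasure (f : Polynomial ℂ) : ℝ :=
  ‖f.leadingCoeff‖ * ((f.roots).map (fun z => max 1 ‖z‖)).prod

/-- The 'simplest cubic' polynomial `fₙ(x) = x³ + n·x² − (n+3)·x + 1`, over `ℂ`. -/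
noncomputable def simplestCubic (n : ℤ) : Polynomial ℂ :=
  X ^ 3 + C (n : ℂ) * X ^ 2 - C ((n : ℂ) + 3) * X + C 1

theorem Polynomial.roots_eq_of_nodup {R : Type*} [CommRing R] [IsDomain R] {p : R[X]}
    (hp : p ≠ 0) {s : Multiset R} (hs : s.Nodup) (hroot : ∀ a ∈ s, p.IsRoot a)
    (hcard : p.natDegree ≤ Multiset.card s) : p.roots = s := by
  have hle : s ≤ p.roots :=
    (Multiset.le_iff_subset hs).2 fun a ha => (mem_roots hp).2 (hroot a ha)
  exact (Multiset.eq_of_le_of_card_le hle ((card_roots' p).trans hcard)).symm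

theorem mahlerMeasure_nonneg (f : ℂ[X]) : 0 ≤ _root_.mahlerMeasure f :=
  mul_nonneg (norm_nonneg _) <| Multiset.prod_nonneg fun _ h => by
    obtain ⟨z, -, rfl⟩ := Multiset.mem_map.1 h
    exact zero_le_one.trans (le_max_left _ _)

theorem mahlerMeasure_mul_norm_eq_norm_coeff_zero {p : ℂ[X]} (hp : p.Monic) {c : ℂ}
    {s : Multiset ℂ} (hroots : p.roots = c ::ₘ s) (hc : ‖c‖ ≤ 1) (hs : ∀ z ∈ s, 1 ≤ ‖z‖) :
    _root_.mahlerMeasure p * ‖c‖ = ‖p.coeff 0‖ := by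
  have hmax : s.map (fun z => max 1 ‖z‖) = s.map norm :=
    Multiset.map_congr rfl fun z hz => max_eq_right (hs z hz)
  rw [(IsAlgClosed.splits p).coeff_zero_eq_prod_roots_of_monic hp, norm_mul, norm_pow, norm_neg,
    norm_one, one_pow, one_mul, _root_.mahlerMeasure, hp.leadingCoeff, norm_one, one_mul, hroots,
    Multiset.map_cons, Multiset.prod_cons, max_eq_left hc, one_mul, hmax, Multiset.prod_cons,
    norm_mul, mul_comm]
  exact congrArg (‖c‖ * ·) (map_multiset_prod normHom s).symm

def simplestCubicFun (x y : ℝ) : ℝ := y ^ 3 + x * y ^ 2 - (x + 3) * y + 1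

theorem continuous_simplestCubicFun (x : ℝ) : Continuous (simplestCubicFun x) := by
  unfold simplestCubicFun; fun_prop

theorem simplestCubic_eval_ofReal (n : ℤ) (y : ℝ) :
    (simplestCubic n).eval (y : ℂ) = simplestCubicFun n y := by
  simp [simplestCubic, simplestCubicFun]

theorem simplestCubic_monic (n : ℤ) : (simplestCubic n).Monic := by
  unfold simplestCubic; monicity!

theorem simplestCubic_natDegree (n : ℤ) : (simplestCubic n).natDegree = 3 := by
  unfold simplestCubic; compute_degree!

theorem simplestCubic_coeff_zero (n : ℤ) : (simplestCubic n).coeff 0 = 1 := by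
  simp [simplestCubic]

theorem exists_simplestCubicFun_root_lt_neg_one {x : ℝ} (hx : 0 < x) :
    ∃ β < -1, simplestCubicFun x β = 0 := by
  obtain ⟨β, hβ, hβ0⟩ := intermediate_value_Ioo (a := -(x + 2)) (b := -1) (by linarith)
    (continuous_simplestCubicFun x).continuousOn
    (show (0 : ℝ) ∈ Set.Ioo _ _ by constructor <;> unfold simplestCubicFun <;> nlinarith)
  exact ⟨β, hβ.2, hβ0⟩

theorem exists_simplestCubicFun_root_gt_one {x : ℝ} (hx : 0 < x) :
    ∃ δ > 1, simplestCubicFun x δ = 0 := by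
  obtain ⟨δ, hδ, hδ0⟩ := intermediate_value_Ioo (a := 1) (b := 2) one_le_two
    (continuous_simplestCubicFun x).continuousOn
    (show (0 : ℝ) ∈ Set.Ioo _ _ by constructor <;> unfold simplestCubicFun <;> linarith)
  exact ⟨δ, hδ.1, hδ0⟩

theorem simplestCubicFun_inv_pos {x : ℝ} (hx : 0 < x) :
    0 < simplestCubicFun x (x + 2 + 2 / x + 1 / x ^ 2)⁻¹ := by
  set t := x + 2 + 2 / x + 1 / x ^ 2 with ht
  have ht0 : 0 < t := by positivity
  have hrev : 0 < t ^ 3 - (x + 3) * t ^ 2 + x * t + 1 := by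
    have : t ^ 3 - (x + 3) * t ^ 2 + x * t + 1
        = (4 * x ^ 6 + 11 * x ^ 5 + 20 * x ^ 4 + 22 * x ^ 3 + 15 * x ^ 2 + 6 * x + 1) / x ^ 6 := by
      rw [ht]; field_simp; ring
    rw [this]; positivity
  have : simplestCubicFun x t⁻¹ = (t ^ 3 - (x + 3) * t ^ 2 + x * t + 1) / t ^ 3 := by
    unfold simplestCubicFun; field_simp; ring
  rw [this]; positivity

theorem exists_simplestCubicFun_root_mem_Ioo {x : ℝ} (hx : 0 < x) :
    ∃ γ ∈ Set.Ioo (x + 2 + 2 / x + 1 / x ^ 2)⁻¹ 1, simplestCubicFun x γ = 0 := by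
  have : 0 < 2 / x + 1 / x ^ 2 := by positivity
  exact intermediate_value_Ioo' (inv_le_one_of_one_le₀ (by linarith))
    (continuous_simplestCubicFun x).continuousOn
    ⟨by unfold simplestCubicFun; linarith, simplestCubicFun_inv_pos hx⟩

theorem mahlerMeasure_simplestCubic_lt {n : ℤ} (hn : 0 < n) :
    _root_.mahlerMeasure (simplestCubic n) < n + 2 + 2 / (n : ℝ) + 1 / (n : ℝ) ^ 2 := by
  have hx : (0 : ℝ) < n := by exact_mod_cast hn
  obtain ⟨β, hβ, hβ0⟩ := exists_simplestCubicFun_root_lt_neg_one hx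
  obtain ⟨γ, ⟨hγt, hγ1⟩, hγ0⟩ := exists_simplestCubicFun_root_mem_Ioo hx
  obtain ⟨δ, hδ, hδ0⟩ := exists_simplestCubicFun_root_gt_one hx
  have hγ : 0 < γ := lt_trans (by positivity) hγt
  have hroot : ∀ y : ℝ, simplestCubicFun n y = 0 → (simplestCubic n).IsRoot (y : ℂ) := by
    intro y hy; simp [IsRoot, simplestCubic_eval_ofReal, hy]
  have hroots : (simplestCubic n).roots = (γ : ℂ) ::ₘ {(β : ℂ), (δ : ℂ)} := by
    refine roots_eq_of_nodup (simplestCubic_monic n).ne_zero ?_ ?_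
      (by simp [simplestCubic_natDegree])
    · simp only [Multiset.insert_eq_cons, Multiset.nodup_cons, Multiset.mem_cons,
        Multiset.mem_singleton, Multiset.nodup_singleton, Complex.ofReal_inj]
      exact ⟨by rintro (h | h) <;> linarith, by intro h; linarith, trivial⟩
    · simp only [Multiset.insert_eq_cons, Multiset.mem_cons, Multiset.mem_singleton]
      rintro a (rfl | rfl | rfl) <;> apply hroot <;> assumption
  have hM := mahlerMeasure_mul_norm_eq_norm_coeff_zero (simplestCubic_monic n) hroots
    (by rw [Complex.norm_real, Real.norm_eq_abs, abs_of_pos hγ]; exact hγ1.le) (by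
      simp only [Multiset.insert_eq_cons, Multiset.mem_cons, Multiset.mem_singleton]
      rintro z (rfl | rfl)
      · rw [Complex.norm_real, Real.norm_eq_abs, abs_of_neg (by linarith)]; linarith
      · rw [Complex.norm_real, Real.norm_eq_abs, abs_of_pos (by linarith)]; exact hδ.le)
  rw [simplestCubic_coeff_zero, norm_one, Complex.norm_real, Real.norm_eq_abs, abs_of_pos hγ,
    ← eq_div_iff hγ.ne', one_div] at hM
  rw [hM]
  exact inv_lt_of_inv_lt₀ (by positivity) hγt

/-- There exists `N` such that for all integers `n ≥ N`,
`M(fₙ)² < 2·(n² + 3n + 9)`; in particular `M(fₙ) < n + 2 + 2/n + 1/n²`. -/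
theorem stmt6 : ∃ N : ℤ, ∀ n : ℤ, N ≤ n →
    _root_.mahlerMeasure (simplestCubic n) ^ 2 < 2 * ((n : ℝ) ^ 2 + 3 * (n : ℝ) + 9) ∧
    _root_.mahlerMeasure (simplestCubic n) < (n : ℝ) + 2 + 2 / (n : ℝ) + 1 / (n : ℝ) ^ 2 := by
  refine ⟨3, fun n hn => ?_⟩
  have hx : (3 : ℝ) ≤ n := by exact_mod_cast hn
  have hM := mahlerMeasure_simplestCubic_lt (n := n) (by omega)
  have hM0 := _root_.mahlerMeasure_nonneg (simplestCubic n)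
  have htail : 2 / (n : ℝ) + 1 / (n : ℝ) ^ 2 ≤ 1 := by
    rw [div_add_div _ _ (by positivity) (by positivity), div_le_one (by positivity)]
    nlinarith
  exact ⟨by nlinarith, hM⟩
end

section
/- For every integer n > 6, the polynomial g_n(x) = x³ − n·x² + n has three real roots r₁ < r₂ < r₃ satisfying −1 < r₁ < −1 + 1/n, 1 < r₂ < 1 + 1/n, and n − 2/n < r₃ < n; consequently the Mahler measure satisfies M(g_n) < n + 1. -/
/-!
The sign changes `g(-1) = -1 < 0 < g(-1 + 1/n)`, `g(1) = 1 > 0 > g(1 + 1/n)` and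
`g(n - 2/n) < 0 < g(n) = n` locate three roots of `g = gₙ` by the intermediate value theorem; being
distinct, they are all the roots of the monic cubic `g`. Only `r₂` and `r₃` lie outside the unit
disk, so `M(g) = r₂ r₃ < (1 + 1/n) n = n + 1`.
-/

open Polynomial

open Set

theorem mahlerMeasure_eq_polynomial_mahlerMeasure (f : ℂ[X]) :
    _root_.mahlerMeasure f = f.mahlerMeasure :=
  f.mahlerMeasure_eq_leadingCoeff_mul_prod_roots.symm

theorem mahlerMeasure_X_sub_C_mul_X_sub_C_mul_X_sub_C (r₁ r₂ r₃ : ℝ) :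
    _root_.mahlerMeasure ((X - C (r₁ : ℂ)) * (X - C (r₂ : ℂ)) * (X - C (r₃ : ℂ))) =
      max 1 |r₁| * max 1 |r₂| * max 1 |r₃| := by
  simp only [mahlerMeasure_eq_polynomial_mahlerMeasure, mahlerMeasure_mul, mahlerMeasure_X_sub_C,
    Complex.norm_real, Real.norm_eq_abs]

theorem cubic_eq_mul_of_roots {R : Type*} [CommRing R] [IsDomain R] {a b c r₁ r₂ r₃ : R}
    (h₁₂ : r₁ ≠ r₂) (h₁₃ : r₁ ≠ r₃) (h₂₃ : r₂ ≠ r₃)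
    (h₁ : r₁ ^ 3 + a * r₁ ^ 2 + b * r₁ + c = 0) (h₂ : r₂ ^ 3 + a * r₂ ^ 2 + b * r₂ + c = 0)
    (h₃ : r₃ ^ 3 + a * r₃ ^ 2 + b * r₃ + c = 0) (x : R) :
    x ^ 3 + a * x ^ 2 + b * x + c = (x - r₁) * (x - r₂) * (x - r₃) := by
  -- divided differences of the cubic at its roots
  have e₁₂ : r₁ ^ 2 + r₁ * r₂ + r₂ ^ 2 + a * (r₁ + r₂) + b = 0 :=
    (mul_eq_zero.mp (by linear_combination h₁ - h₂ :
      (r₁ - r₂) * (r₁ ^ 2 + r₁ * r₂ + r₂ ^ 2 + a * (r₁ + r₂) + b) = 0)).resolve_left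
      (sub_ne_zero.mpr h₁₂)
  have e₁₃ : r₁ ^ 2 + r₁ * r₃ + r₃ ^ 2 + a * (r₁ + r₃) + b = 0 :=
    (mul_eq_zero.mp (by linear_combination h₁ - h₃ :
      (r₁ - r₃) * (r₁ ^ 2 + r₁ * r₃ + r₃ ^ 2 + a * (r₁ + r₃) + b) = 0)).resolve_left
      (sub_ne_zero.mpr h₁₃)
  have hsum : r₁ + r₂ + r₃ + a = 0 :=
    (mul_eq_zero.mp (by linear_combination e₁₂ - e₁₃ :
      (r₂ - r₃) * (r₁ + r₂ + r₃ + a) = 0)).resolve_left (sub_ne_zero.mpr h₂₃)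
  linear_combination (x ^ 2 - r₁ ^ 2 - (x - r₁) * (r₁ + r₂)) * hsum + (x - r₁) * e₁₂ + h₁

section

variable {n : ℝ}

theorem exists_cubic_root_mem_Ioo_neg_one (hn : 0 < n) :
    ∃ r ∈ Ioo (-1) (-1 + 1 / n), r ^ 3 - n * r ^ 2 + n = 0 := by
  have hval : (-1 + 1 / n) ^ 3 - n * (-1 + 1 / n) ^ 2 + n =
      (n ^ 3 + 2 * n ^ 2 - 3 * n + 1) / n ^ 3 := by
    field_simp; ring
  refine intermediate_value_Ioo (by simp [hn.le]) (by fun_prop) ⟨by linarith, ?_⟩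
  rw [hval]
  exact div_pos (by nlinarith [sq_nonneg (n - 1 / 2), sq_nonneg (n - 1)]) (by positivity)

theorem exists_cubic_root_mem_Ioo_one (hn : 4 ≤ n) :
    ∃ r ∈ Ioo 1 (1 + 1 / n), r ^ 3 - n * r ^ 2 + n = 0 := by
  have hn0 : 0 < n := by linarith
  have hval : (1 + 1 / n) ^ 3 - n * (1 + 1 / n) ^ 2 + n =
      (-n ^ 3 + 2 * n ^ 2 + 3 * n + 1) / n ^ 3 := by
    field_simp; ring
  refine intermediate_value_Ioo' (by simp [hn0.le]) (by fun_prop) ⟨?_, by linarith⟩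
  rw [hval]
  exact div_neg_of_neg_of_pos (by nlinarith) (by positivity)

theorem exists_cubic_root_mem_Ioo_sub_two_div (hn : 3 ≤ n) :
    ∃ r ∈ Ioo (n - 2 / n) n, r ^ 3 - n * r ^ 2 + n = 0 := by
  have hn0 : 0 < n := by linarith
  have hval : (n - 2 / n) ^ 3 - n * (n - 2 / n) ^ 2 + n = (-n ^ 4 + 8 * n ^ 2 - 8) / n ^ 3 := by
    field_simp; ring
  refine intermediate_value_Ioo (by linarith [div_pos two_pos hn0]) (by fun_prop)
    ⟨?_, by nlinarith⟩
  rw [hval]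
  exact div_neg_of_neg_of_pos (by nlinarith [sq_nonneg (n ^ 2 - 9)]) (by positivity)

end

theorem X_pow_three_sub_C_mul_X_sq_add_C_eq_of_factorization {n r₁ r₂ r₃ : ℝ}
    (hfac : ∀ x : ℝ, x ^ 3 - n * x ^ 2 + n = (x - r₁) * (x - r₂) * (x - r₃)) :
    (X ^ 3 - C (n : ℂ) * X ^ 2 + C (n : ℂ) : ℂ[X]) =
      (X - C (r₁ : ℂ)) * (X - C (r₂ : ℂ)) * (X - C (r₃ : ℂ)) := by
  have hreal : (X ^ 3 - C n * X ^ 2 + C n : ℝ[X]) = (X - C r₁) * (X - C r₂) * (X - C r₃) :=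
    Polynomial.funext fun x => by simpa using hfac x
  simpa using congrArg (Polynomial.map Complex.ofRealHom) hreal

/-- For every integer `n > 6`, `gₙ(x) = x³ − n·x² + n` has three real roots
`r₁ < r₂ < r₃` with `−1 < r₁ < −1 + 1/n`, `1 < r₂ < 1 + 1/n`, `n − 2/n < r₃ < n`;
consequently `M(gₙ) < n + 1`. -/
theorem stmt7 (n : ℤ) (hn : 6 < n) :
    ∃ r₁ r₂ r₃ : ℝ, r₁ < r₂ ∧ r₂ < r₃ ∧
      (∀ x : ℝ, x ^ 3 - (n : ℝ) * x ^ 2 + (n : ℝ) = (x - r₁) * (x - r₂) * (x - r₃)) ∧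
      -1 < r₁ ∧ r₁ < -1 + 1 / (n : ℝ) ∧
      1 < r₂ ∧ r₂ < 1 + 1 / (n : ℝ) ∧
      (n : ℝ) - 2 / (n : ℝ) < r₃ ∧ r₃ < (n : ℝ) ∧
      _root_.mahlerMeasure (X ^ 3 - C (n : ℂ) * X ^ 2 + C (n : ℂ)) < (n : ℝ) + 1 := by
  have hn4 : (4 : ℝ) ≤ n := by exact_mod_cast (by omega : (4 : ℤ) ≤ n)
  have hinv : 1 / (n : ℝ) ≤ 1 / 4 := one_div_le_one_div_of_le four_pos hn4
  obtain ⟨r₁, ⟨h₁l, h₁u⟩, h₁⟩ := exists_cubic_root_mem_Ioo_neg_one (n := n) (by linarith)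
  obtain ⟨r₂, ⟨h₂l, h₂u⟩, h₂⟩ := exists_cubic_root_mem_Ioo_one (n := n) hn4
  obtain ⟨r₃, ⟨h₃l, h₃u⟩, h₃⟩ := exists_cubic_root_mem_Ioo_sub_two_div (n := n) (by linarith)
  have h₁₂ : r₁ < r₂ := by linarith
  have h₂₃ : r₂ < r₃ := by linarith [show 2 / (n : ℝ) = 2 * (1 / n) by ring]
  have hfac (x : ℝ) : x ^ 3 - (n : ℝ) * x ^ 2 + n = (x - r₁) * (x - r₂) * (x - r₃) := by
    linear_combination cubic_eq_mul_of_roots (a := -(n : ℝ)) (b := 0) (c := n) h₁₂.ne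
      (h₁₂.trans h₂₃).ne h₂₃.ne (by linear_combination h₁) (by linear_combination h₂)
      (by linear_combination h₃) x
  refine ⟨r₁, r₂, r₃, h₁₂, h₂₃, hfac, h₁l, h₁u, h₂l, h₂u, h₃l, h₃u, ?_⟩
  rw [← Complex.ofReal_intCast, X_pow_three_sub_C_mul_X_sq_add_C_eq_of_factorization hfac,
    mahlerMeasure_X_sub_C_mul_X_sub_C_mul_X_sub_C,
    max_eq_left (abs_le.mpr ⟨by linarith, by linarith⟩), abs_of_pos (by linarith),
    abs_of_pos (by linarith), max_eq_right h₂l.le, max_eq_right (by linarith), one_mul]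
  calc r₂ * r₃ < (1 + 1 / n) * n := mul_lt_mul' h₂u.le h₃u (by linarith) (by linarith)
    _ = n + 1 := by field_simp
end

section
/- Let p be a prime with p ≢ ±1 (mod 9), let θ = p^{1/3} be the real cube root of p, and let K = ℚ(θ), so that {1, θ, θ²} is an integral basis of O_K. Then there is no β ∈ O_K with β ∉ ℤ and M(β) < (1/10)·θ² = (1/10)·p^{2/3}. -/
open Polynomial NumberField

/-- The Mahler measure of an algebraic number: the Mahler measure of its minimal
polynomial over `ℚ`. -/
noncomputable def mahlerMeasureAlg {K : Type*} [Field K] [Algebra ℚ K] (α : K) : ℝ :=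
  _root_.mahlerMeasure ((minpoly ℚ α).map (algebraMap ℚ ℂ))

/-!
Write `β = a + bθ + cθ²` with `a, b, c ∈ ℚ` and let `ω` be a primitive cube root of unity.
The conjugates of `β` are `βₖ = a + b ωᵏθ + c (ωᵏθ)²`, so `M(β) = ∏ max(1, |βₖ|)`, and they
are algebraic integers.

* If `c ≠ 0`, then `∑ ωᵏ βₖ = 3cθ²` is an algebraic integer whose cube `p²(3c)³` is rational,
  so `3c ∈ ℤ`, and `θ² ≤ |3c| θ² ≤ ∑ |βₖ| ≤ 3 M(β)`.
* If `c = 0`, then `b ≠ 0`. The integer coefficients `3a`, `3a²` and `a³ + pb³` of the minimal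
  polynomial force `a ∈ ℤ` and then `b ∈ ℤ`, so
  `M(β) ≥ |β₁ β₂| = (a - bθ/2)² + ¾ b²θ² ≥ ¾ θ²`.

Both lower bounds exceed `θ²/10`.
-/

open IntermediateField

theorem mahlerMeasure_prod_X_sub_C {ι : Type*} (s : Finset ι) (z : ι → ℂ) :
    _root_.mahlerMeasure (∏ i ∈ s, (X - C (z i))) = ∏ i ∈ s, max 1 ‖z i‖ := by
  have hprod : ∏ i ∈ s, (X - C (z i)) = ((s.val.map z).map fun w => X - C w).prod := by
    rw [Finset.prod_eq_multiset_prod, Multiset.map_map]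
    rfl
  rw [_root_.mahlerMeasure, (monic_prod_of_monic _ _ fun i _ => monic_X_sub_C (z i)).leadingCoeff,
    hprod, roots_multiset_prod_X_sub_C, Multiset.map_map, norm_one, one_mul]
  rfl

theorem prod_norm_le_mahlerMeasure_prod_X_sub_C {ι : Type*} {s t : Finset ι} (h : t ⊆ s)
    (z : ι → ℂ) : ∏ i ∈ t, ‖z i‖ ≤ _root_.mahlerMeasure (∏ i ∈ s, (X - C (z i))) := by
  rw [mahlerMeasure_prod_X_sub_C]
  exact (Finset.prod_le_prod (fun _ _ => norm_nonneg _) fun _ _ => le_max_right _ _).trans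
    (Finset.prod_le_prod_of_subset_of_one_le h (fun _ _ => by positivity)
      fun _ _ _ => le_max_left _ _)

theorem exists_eq_aeval_of_mem_adjoin {K L : Type*} [Field K] [Field L] [Algebra K L]
    {α x : L} (hα : IsIntegral K α) (hmem : x ∈ K⟮α⟯) :
    ∃ f : K[X], f.natDegree < (minpoly K α).natDegree ∧ x = aeval α f := by
  obtain ⟨f, hdeg, hf⟩ := (adjoin.powerBasis hα).exists_eq_aeval ⟨x, hmem⟩
  refine ⟨f, by simpa using hdeg, ?_⟩
  simpa using congrArg Subtype.val hf

theorem minpoly_natDegree_dvd_of_mem_adjoin {K L : Type*} [Field K] [Field L] [Algebra K L]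
    {α x : L} (hα : IsIntegral K α) (hx : IsIntegral K x) (hmem : x ∈ K⟮α⟯) :
    (minpoly K x).natDegree ∣ (minpoly K α).natDegree := by
  rw [← adjoin.finrank hα, ← adjoin.finrank hx]
  exact finrank_dvd_of_le_right (adjoin_simple_le_iff.mpr hmem)

theorem exists_int_eq_of_isIntegral_ratCast {A : Type*} [Field A] [CharZero A] {q : ℚ}
    (h : IsIntegral ℤ (q : A)) : ∃ n : ℤ, q = n := by
  rw [← eq_ratCast (algebraMap ℚ A), isIntegral_algebraMap_iff (algebraMap ℚ A).injective] at h
  obtain ⟨n, hn⟩ := IsIntegrallyClosed.isIntegral_iff.mp h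
  exact ⟨n, by simpa using hn.symm⟩

theorem Nat.Prime.rat_pow_three_ne {p : ℕ} (hp : p.Prime) (r : ℚ) : r ^ 3 ≠ p := by
  have := Fact.mk hp
  intro h
  have hr : r ≠ 0 := by
    rintro rfl
    exact hp.ne_zero (by exact_mod_cast h.symm)
  have hval := congrArg (padicValRat p) h
  rw [padicValRat.pow, padicValRat.self hp.one_lt] at hval
  omega

theorem Rat.exists_int_eq_of_prime_pow_mul_cube {p k : ℕ} (hp : p.Prime) (hk : k < 3) {x : ℚ}
    {m : ℤ} (h : (p : ℚ) ^ k * x ^ 3 = m) : ∃ n : ℤ, x = n := by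
  obtain ⟨j, hj⟩ : ∃ j, k + (j + 1) = 3 := ⟨2 - k, by omega⟩
  have hp3 : (p : ℚ) ^ 3 = p ^ k * p ^ (j + 1) := by rw [← pow_add, hj]
  -- `p x` is a rational root of the monic `X³ - p ^ (j + 1) m`, hence an integer divisible by `p`
  have hcube : (p * x) ^ 3 = ((p ^ (j + 1) * m : ℤ) : ℚ) := by
    rw [mul_pow, hp3, Int.cast_mul, ← h]
    push_cast
    ring
  have hint : IsIntegral ℤ (p * x : ℚ) :=
    ⟨X ^ 3 - C ((p : ℤ) ^ (j + 1) * m), monic_X_pow_sub_C _ (by norm_num), by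
      rw [← aeval_def, map_sub, map_pow, aeval_X, aeval_C, hcube, algebraMap_int_eq, eq_intCast,
        sub_self]⟩
  obtain ⟨y, hy⟩ := IsIntegrallyClosed.isIntegral_iff.mp hint
  rw [algebraMap_int_eq, eq_intCast] at hy
  have hdvd : (p : ℤ) ∣ y ^ 3 := ⟨p ^ j * m, by
    exact_mod_cast (show (y : ℚ) ^ 3 = p * (p ^ j * m) by rw [hy, hcube]; push_cast; ring)⟩
  obtain ⟨n, rfl⟩ := (Nat.prime_iff_prime_int.mp hp).dvd_of_dvd_pow hdvd
  refine ⟨n, mul_left_cancel₀ (Nat.cast_ne_zero.mpr hp.ne_zero : (p : ℚ) ≠ 0) ?_⟩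
  exact_mod_cast hy.symm

theorem IsPrimitiveRoot.sq_add_self_add_one {ω : ℂ} (hω : IsPrimitiveRoot ω 3) :
    ω ^ 2 + ω + 1 = 0 := by
  have h := hω.geom_sum_eq_zero (by norm_num)
  simp only [Finset.sum_range_succ, Finset.sum_range_zero] at h
  linear_combination h

section PureCubic

variable {p : ℕ} {θ : ℝ} {ω : ℂ} {a b c : ℚ}

noncomputable def cubicConj (ω : ℂ) (θ : ℝ) (a b c : ℚ) (k : ℕ) : ℂ :=
  a + b * (ω ^ k * θ) + c * (ω ^ k * θ) ^ 2

/-- The characteristic polynomial of `a + bθ + cθ²` over `ℚ` when `θ³ = p`. -/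
noncomputable def pureCubicCharpoly (p : ℕ) (a b c : ℚ) : ℚ[X] :=
  X ^ 3 - C (3 * a) * X ^ 2 + C (3 * (a ^ 2 - p * b * c)) * X
    - C (a ^ 3 + p * b ^ 3 + p ^ 2 * c ^ 3 - 3 * p * a * b * c)

theorem map_pureCubicCharpoly (hω : IsPrimitiveRoot ω 3) (hθ : θ ^ 3 = p) :
    (pureCubicCharpoly p a b c).map (algebraMap ℚ ℂ) =
      ∏ k ∈ Finset.range 3, (X - C (cubicConj ω θ a b c k)) := by
  have h1 := hω.sq_add_self_add_one
  have h3 : ω ^ 3 = 1 := hω.pow_eq_one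
  have hθ' : (θ : ℂ) ^ 3 = p := by exact_mod_cast hθ
  have hX : ∀ z₀ z₁ z₂ : ℂ, (X - C z₀) * (X - C z₁) * (X - C z₂) =
      X ^ 3 - C (z₀ + z₁ + z₂) * X ^ 2 + C (z₀ * z₁ + z₀ * z₂ + z₁ * z₂) * X
        - C (z₀ * z₁ * z₂) := by
    intros
    simp only [map_add, map_mul]
    ring
  simp only [Finset.prod_range_succ, Finset.prod_range_zero, one_mul, hX, pureCubicCharpoly,
    cubicConj, Polynomial.map_sub, Polynomial.map_add, Polynomial.map_mul, Polynomial.map_pow,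
    map_X, map_C, eq_ratCast]
  push_cast
  congr 4 <;> grind

theorem aeval_pureCubicCharpoly (hθ : θ ^ 3 = p) :
    aeval ((a : ℝ) + b * θ + c * θ ^ 2) (pureCubicCharpoly p a b c) = 0 := by
  simp only [pureCubicCharpoly, map_sub, map_add, map_mul, map_pow, aeval_X, aeval_C, eq_ratCast]
  push_cast
  grind

theorem sum_pow_mul_cubicConj (hω : IsPrimitiveRoot ω 3) :
    ∑ k ∈ Finset.range 3, ω ^ k * cubicConj ω θ a b c k = 3 * c * θ ^ 2 := by
  have h1 := hω.sq_add_self_add_one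
  have h3 : ω ^ 3 = 1 := hω.pow_eq_one
  simp only [Finset.sum_range_succ, Finset.sum_range_zero, cubicConj]
  grind

theorem cubicConj_one_mul_cubicConj_two (hω : IsPrimitiveRoot ω 3) (hc : c = 0) :
    cubicConj ω θ a b c 1 * cubicConj ω θ a b c 2 =
      (((a - b * θ / 2) ^ 2 + 3 / 4 * b ^ 2 * θ ^ 2 : ℝ) : ℂ) := by
  subst hc
  have h1 := hω.sq_add_self_add_one
  have h3 : ω ^ 3 = 1 := hω.pow_eq_one
  simp only [cubicConj]
  push_cast
  grind

theorem isIntegral_cbrt (hθ : θ ^ 3 = p) : IsIntegral ℤ θ :=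
  ⟨X ^ 3 - C (p : ℤ), monic_X_pow_sub_C _ (by norm_num), by simp [hθ]⟩

theorem minpoly_cbrt (hp : p.Prime) (hθ : θ ^ 3 = p) : minpoly ℚ θ = X ^ 3 - C (p : ℚ) :=
  (minpoly.eq_of_irreducible_of_monic
    (X_pow_sub_C_irreducible_of_prime Nat.prime_three hp.rat_pow_three_ne)
    (by simp [hθ]) (monic_X_pow_sub_C _ (by norm_num))).symm

theorem exists_eq_of_mem_adjoin_cbrt (hp : p.Prime) (hθ : θ ^ 3 = p) {β : ℝ}
    (hβ : β ∈ ℚ⟮θ⟯) : ∃ a b c : ℚ, β = a + b * θ + c * θ ^ 2 := by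
  obtain ⟨f, hdeg, rfl⟩ := exists_eq_aeval_of_mem_adjoin (isIntegral_cbrt hθ).tower_top hβ
  rw [minpoly_cbrt hp hθ, natDegree_X_pow_sub_C] at hdeg
  refine ⟨f.coeff 0, f.coeff 1, f.coeff 2, ?_⟩
  simp [aeval_eq_sum_range' hdeg, Finset.sum_range_succ, Algebra.smul_def]

theorem minpoly_eq_pureCubicCharpoly (hp : p.Prime) (hθ : θ ^ 3 = p)
    (hirr : ∀ q : ℚ, (a : ℝ) + b * θ + c * θ ^ 2 ≠ q) :
    minpoly ℚ ((a : ℝ) + b * θ + c * θ ^ 2) = pureCubicCharpoly p a b c := by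
  have hmonic : (pureCubicCharpoly p a b c).Monic := by
    unfold pureCubicCharpoly
    monicity!
  have hdeg : (pureCubicCharpoly p a b c).natDegree = 3 := by
    unfold pureCubicCharpoly
    compute_degree!
  have hint : IsIntegral ℚ ((a : ℝ) + b * θ + c * θ ^ 2) :=
    ⟨_, hmonic, aeval_pureCubicCharpoly hθ⟩
  have hθmem : θ ∈ ℚ⟮θ⟯ := mem_adjoin_simple_self ℚ θ
  have hmem : (a : ℝ) + b * θ + c * θ ^ 2 ∈ ℚ⟮θ⟯ :=
    add_mem (add_mem (SubfieldClass.ratCast_mem _ a)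
      (mul_mem (SubfieldClass.ratCast_mem _ b) hθmem))
      (mul_mem (SubfieldClass.ratCast_mem _ c) (pow_mem hθmem 2))
  have hdvd := minpoly_natDegree_dvd_of_mem_adjoin (isIntegral_cbrt hθ).tower_top hint hmem
  rw [minpoly_cbrt hp hθ, natDegree_X_pow_sub_C, Nat.dvd_prime Nat.prime_three,
    minpoly.natDegree_eq_one_iff] at hdvd
  refine (eq_of_monic_of_dvd_of_natDegree_le (minpoly.monic hint) hmonic
    (minpoly.dvd _ _ (aeval_pureCubicCharpoly hθ)) ?_).symm
  rcases hdvd with ⟨q, hq⟩ | h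
  · exact absurd (by simpa using hq.symm) (hirr q)
  · omega

theorem mahlerMeasureAlg_eq_prod_cubicConj (hp : p.Prime) (hω : IsPrimitiveRoot ω 3)
    (hθ : θ ^ 3 = p) (hirr : ∀ q : ℚ, (a : ℝ) + b * θ + c * θ ^ 2 ≠ q) :
    mahlerMeasureAlg ((a : ℝ) + b * θ + c * θ ^ 2) =
      _root_.mahlerMeasure (∏ k ∈ Finset.range 3, (X - C (cubicConj ω θ a b c k))) := by
  rw [mahlerMeasureAlg, minpoly_eq_pureCubicCharpoly hp hθ hirr, map_pureCubicCharpoly hω hθ]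

theorem prod_norm_cubicConj_le_mahlerMeasureAlg (hp : p.Prime) (hω : IsPrimitiveRoot ω 3)
    (hθ : θ ^ 3 = p) (hirr : ∀ q : ℚ, (a : ℝ) + b * θ + c * θ ^ 2 ≠ q) {t : Finset ℕ}
    (ht : t ⊆ Finset.range 3) :
    ∏ k ∈ t, ‖cubicConj ω θ a b c k‖ ≤ mahlerMeasureAlg ((a : ℝ) + b * θ + c * θ ^ 2) := by
  rw [mahlerMeasureAlg_eq_prod_cubicConj hp hω hθ hirr]
  exact prod_norm_le_mahlerMeasure_prod_X_sub_C ht _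

theorem exists_int_eq_coeff_pureCubicCharpoly (hp : p.Prime) (hθ : θ ^ 3 = p)
    (hirr : ∀ q : ℚ, (a : ℝ) + b * θ + c * θ ^ 2 ≠ q)
    (hint : IsIntegral ℤ ((a : ℝ) + b * θ + c * θ ^ 2)) (i : ℕ) :
    ∃ n : ℤ, (pureCubicCharpoly p a b c).coeff i = n := by
  rw [← minpoly_eq_pureCubicCharpoly hp hθ hirr,
    minpoly.isIntegrallyClosed_eq_field_fractions' ℚ hint, coeff_map]
  exact ⟨_, eq_intCast _ _⟩

theorem isIntegral_cubicConj (hp : p.Prime) (hω : IsPrimitiveRoot ω 3) (hθ : θ ^ 3 = p)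
    (hirr : ∀ q : ℚ, (a : ℝ) + b * θ + c * θ ^ 2 ≠ q)
    (hint : IsIntegral ℤ ((a : ℝ) + b * θ + c * θ ^ 2)) {k : ℕ} (hk : k < 3) :
    IsIntegral ℤ (cubicConj ω θ a b c k) := by
  have hmap : (minpoly ℤ ((a : ℝ) + b * θ + c * θ ^ 2)).map (algebraMap ℤ ℂ) =
      ∏ k ∈ Finset.range 3, (X - C (cubicConj ω θ a b c k)) := by
    rw [← map_pureCubicCharpoly hω hθ, ← minpoly_eq_pureCubicCharpoly hp hθ hirr,
      minpoly.isIntegrallyClosed_eq_field_fractions' ℚ hint, Polynomial.map_map,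
      ← IsScalarTower.algebraMap_eq]
  refine ⟨_, minpoly.monic hint, ?_⟩
  rw [← eval_map, hmap, eval_prod]
  exact Finset.prod_eq_zero (Finset.mem_range.mpr hk) (by simp)

theorem exists_int_eq_linear_coeff_of_isIntegral (hp : p.Prime) (hθ : θ ^ 3 = p)
    (hirr : ∀ q : ℚ, (a : ℝ) + b * θ + c * θ ^ 2 ≠ q)
    (hint : IsIntegral ℤ ((a : ℝ) + b * θ + c * θ ^ 2)) (hc : c = 0) : ∃ n : ℤ, b = n := by
  obtain ⟨A, hA⟩ := exists_int_eq_coeff_pureCubicCharpoly hp hθ hirr hint 2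
  obtain ⟨V, hV⟩ := exists_int_eq_coeff_pureCubicCharpoly hp hθ hirr hint 1
  obtain ⟨N, hN⟩ := exists_int_eq_coeff_pureCubicCharpoly hp hθ hirr hint 0
  simp only [pureCubicCharpoly, coeff_sub, coeff_add, coeff_C_mul, coeff_X_pow, coeff_X,
    coeff_C] at hA hV hN
  norm_num [hc] at hA hV hN
  have hA2 : A ^ 2 = 3 * V := by
    exact_mod_cast (show (A : ℚ) ^ 2 = 3 * V by rw [← hA, ← hV]; ring)
  obtain ⟨n, rfl⟩ := Int.prime_three.dvd_of_dvd_pow ⟨V, hA2⟩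
  obtain rfl : a = -n := by
    push_cast at hA
    linarith
  exact Rat.exists_int_eq_of_prime_pow_mul_cube hp (k := 1) (by norm_num) (m := n ^ 3 - N)
    (by push_cast; linear_combination -hN)

theorem exists_int_eq_three_mul_quadratic_coeff_of_isIntegral (hp : p.Prime)
    (hω : IsPrimitiveRoot ω 3) (hθ : θ ^ 3 = p)
    (hirr : ∀ q : ℚ, (a : ℝ) + b * θ + c * θ ^ 2 ≠ q)
    (hint : IsIntegral ℤ ((a : ℝ) + b * θ + c * θ ^ 2)) : ∃ n : ℤ, 3 * c = n := by
  have hsum : IsIntegral ℤ (3 * (c : ℂ) * θ ^ 2) := by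
    rw [← sum_pow_mul_cubicConj hω]
    exact IsIntegral.sum _ fun k hk => ((hω.isIntegral (by norm_num)).pow k).mul
      (isIntegral_cubicConj hp hω hθ hirr hint (Finset.mem_range.mp hk))
  have hcube : (3 * (c : ℂ) * θ ^ 2) ^ 3 = (((p : ℚ) ^ 2 * (3 * c) ^ 3 : ℚ) : ℂ) := by
    have hθ' : (θ : ℂ) ^ 3 = p := by exact_mod_cast hθ
    push_cast
    linear_combination (27 * (c : ℂ) ^ 3 * ((θ : ℂ) ^ 3 + p)) * hθ'
  obtain ⟨m, hm⟩ := exists_int_eq_of_isIntegral_ratCast (hcube ▸ hsum.pow 3)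
  exact Rat.exists_int_eq_of_prime_pow_mul_cube hp (by norm_num) hm

theorem sq_le_three_mul_mahlerMeasureAlg (hp : p.Prime) (hω : IsPrimitiveRoot ω 3)
    (hθ : θ ^ 3 = p) (hirr : ∀ q : ℚ, (a : ℝ) + b * θ + c * θ ^ 2 ≠ q)
    (hint : IsIntegral ℤ ((a : ℝ) + b * θ + c * θ ^ 2)) (hc : c ≠ 0) :
    θ ^ 2 ≤ 3 * mahlerMeasureAlg ((a : ℝ) + b * θ + c * θ ^ 2) := by
  obtain ⟨n, hn⟩ := exists_int_eq_three_mul_quadratic_coeff_of_isIntegral hp hω hθ hirr hint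
  have h3c : 1 ≤ ‖3 * (c : ℂ)‖ := by
    have hn0 : n ≠ 0 := by
      rintro rfl
      exact hc (by simpa using hn)
    rw [show 3 * (c : ℂ) = n by exact_mod_cast hn, Complex.norm_intCast]
    exact_mod_cast Int.one_le_abs hn0
  have hle : ∀ k ∈ Finset.range 3, ‖cubicConj ω θ a b c k‖ ≤
      mahlerMeasureAlg ((a : ℝ) + b * θ + c * θ ^ 2) := fun k hk => by
    simpa using prod_norm_cubicConj_le_mahlerMeasureAlg hp hω hθ hirr
      (Finset.singleton_subset_iff.mpr hk)
  calc θ ^ 2 ≤ ‖3 * (c : ℂ)‖ * θ ^ 2 := le_mul_of_one_le_left (sq_nonneg θ) h3c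
    _ = ‖∑ k ∈ Finset.range 3, ω ^ k * cubicConj ω θ a b c k‖ := by
      rw [sum_pow_mul_cubicConj hω, norm_mul (3 * (c : ℂ)), norm_pow, Complex.norm_real,
        Real.norm_eq_abs, sq_abs]
    _ ≤ ∑ k ∈ Finset.range 3, ‖cubicConj ω θ a b c k‖ := by
      refine (norm_sum_le _ _).trans_eq (Finset.sum_congr rfl fun k _ => ?_)
      rw [norm_mul, norm_pow, hω.norm'_eq_one (by norm_num), one_pow, one_mul]
    _ ≤ 3 * mahlerMeasureAlg ((a : ℝ) + b * θ + c * θ ^ 2) := by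
      simpa using Finset.sum_le_sum hle

theorem three_mul_sq_le_four_mul_mahlerMeasureAlg (hp : p.Prime) (hω : IsPrimitiveRoot ω 3)
    (hθ : θ ^ 3 = p) (hirr : ∀ q : ℚ, (a : ℝ) + b * θ + c * θ ^ 2 ≠ q)
    (hint : IsIntegral ℤ ((a : ℝ) + b * θ + c * θ ^ 2)) (hc : c = 0) :
    3 * θ ^ 2 ≤ 4 * mahlerMeasureAlg ((a : ℝ) + b * θ + c * θ ^ 2) := by
  obtain ⟨n, hn⟩ := exists_int_eq_linear_coeff_of_isIntegral hp hθ hirr hint hc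
  have hb : (1 : ℝ) ≤ (b : ℝ) ^ 2 := by
    have hn0 : n ≠ 0 := by
      rintro rfl
      exact hirr a (by simp [hn, hc])
    rw [hn, Rat.cast_intCast, one_le_sq_iff_one_le_abs]
    exact_mod_cast Int.one_le_abs hn0
  have hprod := prod_norm_cubicConj_le_mahlerMeasureAlg hp hω hθ hirr (t := {1, 2}) (by decide)
  rw [Finset.prod_pair (by norm_num), ← norm_mul, cubicConj_one_mul_cubicConj_two hω hc,
    Complex.norm_real, Real.norm_eq_abs] at hprod
  have hE : 3 / 4 * (b : ℝ) ^ 2 * θ ^ 2 ≤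
      |((a : ℝ) - b * θ / 2) ^ 2 + 3 / 4 * (b : ℝ) ^ 2 * θ ^ 2| := by
    rw [abs_of_nonneg (by positivity)]
    linarith [sq_nonneg ((a : ℝ) - b * θ / 2)]
  nlinarith [hE.trans hprod, mul_le_mul_of_nonneg_right hb (sq_nonneg θ)]

end PureCubic

theorem stmt13_general (p : ℕ) (hp : p.Prime)
    (θ : ℝ) (hθ : θ = (p : ℝ) ^ ((1 : ℝ)/3)) :
    ¬ ∃ β : ℝ, β ∈ IntermediateField.adjoin ℚ ({θ} : Set ℝ) ∧ IsIntegral ℤ β ∧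
        (∀ m : ℤ, β ≠ (m : ℝ)) ∧
        mahlerMeasureAlg β < (1/10 : ℝ) * θ ^ 2 := by
  rintro ⟨β, hmem, hint, hnotint, hM⟩
  have hθ3 : θ ^ 3 = p := by
    rw [hθ, ← Real.rpow_natCast, ← Real.rpow_mul (Nat.cast_nonneg p)]
    norm_num
  have hθ2 : 0 < θ ^ 2 := by
    have : θ ≠ 0 := by
      rintro rfl
      simp [eq_comm, hp.ne_zero] at hθ3
    positivity
  obtain ⟨a, b, c, rfl⟩ := exists_eq_of_mem_adjoin_cbrt hp hθ3 hmem
  have hirr : ∀ q : ℚ, (a : ℝ) + b * θ + c * θ ^ 2 ≠ q := by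
    intro q hq
    obtain ⟨n, rfl⟩ := exists_int_eq_of_isIntegral_ratCast (hq ▸ hint)
    exact hnotint n (by simpa using hq)
  obtain ⟨ω, hω⟩ : ∃ ω : ℂ, IsPrimitiveRoot ω 3 :=
    ⟨_, Complex.isPrimitiveRoot_exp 3 (by norm_num)⟩
  rcases eq_or_ne c 0 with hc | hc
  · linarith [three_mul_sq_le_four_mul_mahlerMeasureAlg hp hω hθ3 hirr hint hc]
  · linarith [sq_le_three_mul_mahlerMeasureAlg hp hω hθ3 hirr hint hc]

/-- Let `p` be a prime with `p ≢ ±1 (mod 9)`, `θ = p^{1/3}` the real cube root of `p`,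
and `K = ℚ(θ)` (so `O_K = ℤ[θ]`). Then there is no `β ∈ O_K`, `β ∉ ℤ`, with
`M(β) < (1/10)·θ² = (1/10)·p^{2/3}`. -/
theorem stmt13 (p : ℕ) (hp : p.Prime)
    (h1 : (p : ZMod 9) ≠ 1) (h2 : (p : ZMod 9) ≠ -1)
    (θ : ℝ) (hθ : θ = (p : ℝ) ^ ((1 : ℝ)/3)) :
    ¬ ∃ β : ℝ, β ∈ IntermediateField.adjoin ℚ ({θ} : Set ℝ) ∧ IsIntegral ℤ β ∧
        (∀ m : ℤ, β ≠ (m : ℝ)) ∧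
        mahlerMeasureAlg β < (1/10 : ℝ) * θ ^ 2 :=
  stmt13_general p hp θ hθ
end

section
/- Let K be a cubic number field with integral basis {1, b₂, b₃}, let φ: K → ℝ³ be the Minkowski embedding, set β_i = φ(b_i) (with b₁ = 1), let β₁*, β₂*, β₃* be the Gram–Schmidt orthogonalization of β₁, β₂, β₃, and assume the Gram–Schmidt coefficients satisfy |μ_{2,1}|, |μ_{3,1}|, |μ_{3,2}| ≤ 1/2. Set f = 3 if K is totally real and f = 2 otherwise. If α = a + b·b₂ + c·b₃ ∈ O_K is nonzero with a, b, c ∈ ℤ and M(α) < C, then |c| ≤ f^{1/2}·C/‖β₃*‖, |b| ≤ f^{1/2}·C/‖β₂*‖ + (1/2)·f^{1/2}·C/‖β₃*‖, and |a| ≤ f^{1/2}·C/‖β₁*‖ + (1/2)·f^{1/2}·C/‖β₂*‖ + (3/4)·f^{1/2}·C/‖β₃*‖. -/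
open Polynomial NumberField
open scoped RealInnerProductSpace

/-!
Every conjugate of `α` has absolute value at most `M(α)`, so each of the three coordinates of
`φ(α)` (resp. the real coordinate and the complex one) is bounded by `M(α)`, and
`‖φ(α)‖ ≤ √f · M(α) < √f · C`. Writing `φ(α) = a β₁ + b β₂ + c β₃` in the orthogonal basis
`βᵢ*`, the coordinates are `a + μ₂₁ b + μ₃₁ c`, `b + μ₃₂ c` and `c`, each bounded by
`‖φ(α)‖ / ‖βᵢ*‖` by Cauchy–Schwarz; back-substitution with `|μᵢⱼ| ≤ 1/2` gives the bounds.
That the `βᵢ*` are nonzero is Dedekind's independence of characters: a vector orthogonal to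
`φ(K)` gives a vanishing linear combination of distinct complex embeddings, so `φ(K)` spans
`ℝ³`, and `φ(K)` is the `ℚ`-span of `β₁, β₂, β₃`.
-/

open Submodule Set InnerProductSpace

lemma norm_le_mahlerMeasure_of_mem_roots {p : ℂ[X]} (hp : p.Monic) {z : ℂ} (hz : z ∈ p.roots) :
    ‖z‖ ≤ _root_.mahlerMeasure p := by
  rw [_root_.mahlerMeasure, hp.leadingCoeff, norm_one, one_mul]
  exact (le_max_right 1 ‖z‖).trans (Multiset.mem_le_prod_of_one_le (fun _ => le_max_left _ _) hz)

lemma norm_le_mahlerMeasureAlg {K : Type*} [Field K] [Algebra ℚ K] {α : K} (hα : IsIntegral ℚ α)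
    (ψ : K →+* ℂ) : ‖ψ α‖ ≤ mahlerMeasureAlg α := by
  refine norm_le_mahlerMeasure_of_mem_roots ((minpoly.monic hα).map _) ?_
  rw [mem_roots_map_of_injective (algebraMap ℚ ℂ).injective (minpoly.ne_zero hα),
    show algebraMap ℚ ℂ = ψ.comp (algebraMap ℚ K) from Subsingleton.elim _ _, ← hom_eval₂,
    ← aeval_def, minpoly.aeval, map_zero]

lemma le_sqrt_mul_of_sq_le_mul_sq {r f M : ℝ} (hM : 0 ≤ M) (h : r ^ 2 ≤ f * M ^ 2) :
    r ≤ √f * M := by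
  calc r ≤ |r| := le_abs_self r
    _ ≤ √(f * M ^ 2) := Real.abs_le_sqrt h
    _ = √f * M := by rw [Real.sqrt_mul' _ (sq_nonneg M), Real.sqrt_sq hM]

section GramSchmidt

variable {E : Type*} [NormedAddCommGroup E] [InnerProductSpace ℝ E]

lemma abs_le_div_norm_of_pairwise_inner_eq_zero {ι : Type*} [Fintype ι] {e : ι → E}
    (he : Pairwise fun i j => ⟪e i, e j⟫ = 0) {t : ι → ℝ} {D : ℝ} (hD : ‖∑ j, t j • e j‖ ≤ D)
    {i : ι} (hi : e i ≠ 0) : |t i| ≤ D / ‖e i‖ := by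
  have hinner : ⟪∑ j, t j • e j, e i⟫ = t i * ‖e i‖ ^ 2 := by
    rw [sum_inner, Finset.sum_eq_single i
        (fun j _ hji => by rw [real_inner_smul_left, he hji, mul_zero]) (by simp),
      real_inner_smul_left, real_inner_self_eq_norm_sq]
  have hpos : 0 < ‖e i‖ := norm_pos_iff.2 hi
  have hcs := abs_real_inner_le_norm (∑ j, t j • e j) (e i)
  rw [hinner, abs_mul, abs_of_nonneg (sq_nonneg ‖e i‖), sq, ← mul_assoc] at hcs
  rw [le_div_iff₀ hpos]
  exact (le_of_mul_le_mul_right hcs hpos).trans hD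

lemma abs_le_of_abs_unitriangular_le {a b c μ21 μ31 μ32 x y z : ℝ} (h21 : |μ21| ≤ 1/2)
    (h31 : |μ31| ≤ 1/2) (h32 : |μ32| ≤ 1/2) (hc : |c| ≤ z) (hb : |b + μ32 * c| ≤ y)
    (ha : |a + μ21 * b + μ31 * c| ≤ x) :
    |b| ≤ y + (1/2) * z ∧ |a| ≤ x + (1/2) * y + (3/4) * z := by
  have hmul {μ s r : ℝ} (hμ : |μ| ≤ 1/2) (hs : |s| ≤ r) : |μ * s| ≤ 1/2 * r := by
    rw [abs_mul]; exact mul_le_mul hμ hs (abs_nonneg _) (by norm_num)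
  have hb' : |b| ≤ y + (1/2) * z := by
    obtain ⟨h₁, h₂⟩ := abs_le.1 hb
    obtain ⟨h₃, h₄⟩ := abs_le.1 (hmul h32 hc)
    exact abs_le.2 ⟨by linarith, by linarith⟩
  obtain ⟨h₁, h₂⟩ := abs_le.1 ha
  obtain ⟨h₃, h₄⟩ := abs_le.1 (hmul h21 hb')
  obtain ⟨h₅, h₆⟩ := abs_le.1 (hmul h31 hc)
  exact ⟨hb', abs_le.2 ⟨by linarith, by linarith⟩⟩

variable {β₁ β₂ β₃ β₁s β₂s β₃s : E} {μ21 μ31 μ32 : ℝ}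

lemma gramSchmidt_fin_three_eq (hμ21 : μ21 = ⟪β₂, β₁s⟫ / ‖β₁s‖ ^ 2)
    (hμ31 : μ31 = ⟪β₃, β₁s⟫ / ‖β₁s‖ ^ 2) (hμ32 : μ32 = ⟪β₃, β₂s⟫ / ‖β₂s‖ ^ 2)
    (hgs1 : β₁s = β₁) (hgs2 : β₂s = β₂ - μ21 • β₁s) (hgs3 : β₃s = β₃ - μ31 • β₁s - μ32 • β₂s) :
    gramSchmidt ℝ ![β₁, β₂, β₃] = ![β₁s, β₂s, β₃s] := by
  have h0 : gramSchmidt ℝ ![β₁, β₂, β₃] 0 = β₁s := by rw [hgs1]; exact gramSchmidt_bot ℝ _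
  have h1 : gramSchmidt ℝ ![β₁, β₂, β₃] 1 = β₂s := by
    rw [gramSchmidt_def, show Finset.Iio (1 : Fin 3) = {0} by decide, Finset.sum_singleton,
      starProjection_singleton, h0, hgs2, hμ21, real_inner_comm]
    simp
  have h2 : gramSchmidt ℝ ![β₁, β₂, β₃] 2 = β₃s := by
    rw [gramSchmidt_def, show Finset.Iio (2 : Fin 3) = {0, 1} by decide,
      Finset.sum_pair (by decide), starProjection_singleton, starProjection_singleton, h0, h1,
      hgs3, hμ31, hμ32, real_inner_comm β₁s, real_inner_comm β₂s]
    simp [sub_sub]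
  ext1 n; fin_cases n
  exacts [h0, h1, h2]

theorem abs_coeffs_le_of_gramSchmidt (hind : LinearIndependent ℝ ![β₁, β₂, β₃])
    (hμ21 : μ21 = ⟪β₂, β₁s⟫ / ‖β₁s‖ ^ 2) (hμ31 : μ31 = ⟪β₃, β₁s⟫ / ‖β₁s‖ ^ 2)
    (hμ32 : μ32 = ⟪β₃, β₂s⟫ / ‖β₂s‖ ^ 2)
    (hgs1 : β₁s = β₁) (hgs2 : β₂s = β₂ - μ21 • β₁s) (hgs3 : β₃s = β₃ - μ31 • β₁s - μ32 • β₂s)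
    (hb21 : |μ21| ≤ 1/2) (hb31 : |μ31| ≤ 1/2) (hb32 : |μ32| ≤ 1/2)
    {a b c D : ℝ} (hD : ‖a • β₁ + b • β₂ + c • β₃‖ ≤ D) :
    |c| ≤ D / ‖β₃s‖ ∧ |b| ≤ D / ‖β₂s‖ + (1/2) * (D / ‖β₃s‖) ∧
      |a| ≤ D / ‖β₁s‖ + (1/2) * (D / ‖β₂s‖) + (3/4) * (D / ‖β₃s‖) := by
  have hgs := gramSchmidt_fin_three_eq hμ21 hμ31 hμ32 hgs1 hgs2 hgs3
  have horth : Pairwise fun i j => ⟪![β₁s, β₂s, β₃s] i, ![β₁s, β₂s, β₃s] j⟫ = 0 :=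
    hgs ▸ gramSchmidt_pairwise_orthogonal ℝ _
  have hne (i : Fin 3) : ![β₁s, β₂s, β₃s] i ≠ 0 := hgs ▸ gramSchmidt_ne_zero i hind
  have hcoords : ∑ j, ![a + μ21 * b + μ31 * c, b + μ32 * c, c] j • ![β₁s, β₂s, β₃s] j =
      a • β₁ + b • β₂ + c • β₃ := by
    simp only [Fin.sum_univ_three, Matrix.cons_val]
    rw [hgs3, hgs2, hgs1]
    module
  rw [← hcoords] at hD
  have hc := abs_le_div_norm_of_pairwise_inner_eq_zero horth hD (hne 2)
  have hb := abs_le_div_norm_of_pairwise_inner_eq_zero horth hD (hne 1)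
  have ha := abs_le_div_norm_of_pairwise_inner_eq_zero horth hD (hne 0)
  simp only [Matrix.cons_val] at ha hb hc
  exact ⟨hc, abs_le_of_abs_unitriangular_le hb21 hb31 hb32 hc hb ha⟩

end GramSchmidt

lemma eq_zero_of_forall_sum_mul_ringHom_eq_zero {R L ι : Type*} [NonAssocSemiring R] [CommRing L]
    [IsDomain L] [Fintype ι] {ψ : ι → R →+* L} (hψ : Function.Injective ψ) {c : ι → L}
    (h : ∀ x, ∑ j, c j * ψ j x = 0) : c = 0 := by
  have hli := (linearIndependent_monoidHom R L).comp (fun j => (ψ j : R →* L))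
    fun i j hij => hψ (RingHom.ext fun x => DFunLike.congr_fun hij x)
  funext j
  exact Fintype.linearIndependent_iff.1 hli c (funext fun x => by simpa using h x) j

lemma span_range_eq_top_of_forall_inner_eq_zero {X E : Type*} [NormedAddCommGroup E]
    [InnerProductSpace ℝ E] [FiniteDimensional ℝ E] {φ : X → E}
    (h : ∀ w, (∀ x, ⟪w, φ x⟫ = 0) → w = 0) : span ℝ (range φ) = ⊤ := by
  rw [← orthogonal_eq_bot_iff, Submodule.eq_bot_iff]
  exact fun w hw => h w fun x => (mem_orthogonal' _ _).1 hw _ (subset_span ⟨x, rfl⟩)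

lemma linearIndependent_comp_of_span_eq_top {R S M E ι : Type*} [Semiring R] [DivisionRing S]
    [AddCommGroup M] [Module R M] [AddCommGroup E] [Module R E] [Module S E] [SMul R S]
    [IsScalarTower R S E] [Fintype ι] (L : M →ₗ[R] E) {b : ι → M}
    (hb : span R (range b) = ⊤) (hL : span S (range L) = ⊤)
    (hcard : Fintype.card ι = Module.finrank S E) : LinearIndependent S (L ∘ b) := by
  refine linearIndependent_of_top_le_span_of_card_eq_finrank ?_ hcard
  rw [← hL, span_le]
  rintro _ ⟨x, rfl⟩
  have hx : L x ∈ span R (range (L ∘ b)) := by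
    rw [range_comp, span_image, hb]; exact mem_map_of_mem mem_top
  exact span_le_restrictScalars R S _ hx

lemma span_rat_eq_top_of_isIntegral_mem_span_int {K : Type*} [Field K] [NumberField K] {s : Set K}
    (hs : ∀ x : K, IsIntegral ℤ x → x ∈ span ℤ s) : span ℚ s = ⊤ := by
  refine eq_top_iff'.2 fun x => ?_
  obtain ⟨d, hd, hdx⟩ := ((IsFractionRing.isAlgebraic_iff ℤ ℚ K).2
    (Algebra.IsAlgebraic.isAlgebraic x)).exists_integral_multiple
  refine (smul_mem_iff _ (Int.cast_ne_zero.2 hd : (d : ℚ) ≠ 0)).1 ?_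
  rw [Int.cast_smul_eq_zsmul]
  exact span_le_restrictScalars ℤ ℚ s (hs _ hdx)

section TotallyReal

variable {K : Type*} [Field K] {φ : K → EuclideanSpace ℝ (Fin 3)} {σ₁ σ₂ σ₃ : K →+* ℝ}

lemma map_add_of_totallyReal (hφ : ∀ x, (φ x).ofLp = ![σ₁ x, σ₂ x, σ₃ x]) (x y : K) :
    φ (x + y) = φ x + φ y := by
  ext i; fin_cases i <;> simp [hφ]

lemma span_range_eq_top_of_totallyReal (h12 : σ₁ ≠ σ₂) (h13 : σ₁ ≠ σ₃) (h23 : σ₂ ≠ σ₃)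
    (hφ : ∀ x, (φ x).ofLp = ![σ₁ x, σ₂ x, σ₃ x]) : span ℝ (range φ) = ⊤ := by
  refine span_range_eq_top_of_forall_inner_eq_zero fun w hw => ?_
  have hinj : Function.Injective ![σ₁, σ₂, σ₃] := by
    intro i j; fin_cases i <;> fin_cases j <;> simp [h12, h13, h23, h12.symm, h13.symm, h23.symm]
  have hw0 := eq_zero_of_forall_sum_mul_ringHom_eq_zero hinj (c := w.ofLp) fun x => by
    simpa [PiLp.inner_apply, Fin.sum_univ_three, hφ, mul_comm] using hw x
  ext i; exact congrFun hw0 i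

lemma norm_le_sqrt_three_mul_mahlerMeasureAlg [Algebra ℚ K]
    (hφ : ∀ x, (φ x).ofLp = ![σ₁ x, σ₂ x, σ₃ x]) {x : K} (hx : IsIntegral ℚ x) :
    ‖φ x‖ ≤ √3 * mahlerMeasureAlg x := by
  have hM (σ : K →+* ℝ) : |σ x| ≤ mahlerMeasureAlg x := by
    simpa using norm_le_mahlerMeasureAlg hx (Complex.ofRealHom.comp σ)
  have hM0 : 0 ≤ mahlerMeasureAlg x := (abs_nonneg _).trans (hM σ₁)
  have hsq (σ : K →+* ℝ) : σ x ^ 2 ≤ mahlerMeasureAlg x ^ 2 := by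
    rw [sq_le_sq, abs_of_nonneg hM0]; exact hM σ
  refine le_sqrt_mul_of_sq_le_mul_sq hM0 ?_
  rw [EuclideanSpace.norm_sq_eq, Fin.sum_univ_three]
  simp [hφ]
  linarith [hsq σ₁, hsq σ₂, hsq σ₃]

end TotallyReal

section Complex

variable {K : Type*} [Field K] {φ : K → EuclideanSpace ℝ (Fin 3)} {σ : K →+* ℝ} {τ : K →+* ℂ}

lemma map_add_of_complex (hφ : ∀ x, (φ x).ofLp = ![σ x, (τ x).re, (τ x).im]) (x y : K) :
    φ (x + y) = φ x + φ y := by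
  ext i; fin_cases i <;> simp [hφ]

lemma span_range_eq_top_of_complex (hτ : ∃ x, (τ x).im ≠ 0)
    (hφ : ∀ x, (φ x).ofLp = ![σ x, (τ x).re, (τ x).im]) : span ℝ (range φ) = ⊤ := by
  obtain ⟨x₀, hx₀⟩ := hτ
  refine span_range_eq_top_of_forall_inner_eq_zero fun w hw => ?_
  have hinj : Function.Injective ![Complex.ofRealHom.comp σ, τ, (starRingEnd ℂ).comp τ] := by
    -- at `x₀` their imaginary parts are `0`, `t` and `-t` with `t ≠ 0`
    intro i j hij
    have h := congrArg (fun g : K →+* ℂ => (g x₀).im) hij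
    fin_cases i <;> fin_cases j <;> simp at h ⊢ <;> grind
  -- `w₁ Re z + w₂ Im z = ((w₁ - i w₂) / 2) z + ((w₁ + i w₂) / 2) z̄`
  have hw0 := eq_zero_of_forall_sum_mul_ringHom_eq_zero hinj
    (c := ![w 0, (w 1 - w 2 * Complex.I) / 2, (w 1 + w 2 * Complex.I) / 2]) fun x => by
      have := hw x
      simp [PiLp.inner_apply, Fin.sum_univ_three, hφ] at this
      rw [Fin.sum_univ_three]
      apply Complex.ext <;> simp <;> linarith
  have h0 := congrFun hw0 0
  have h1 := congrFun hw0 1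
  simp [Complex.ext_iff] at h0 h1
  ext i; fin_cases i <;> simp [h0, h1]

lemma norm_le_sqrt_two_mul_mahlerMeasureAlg [Algebra ℚ K]
    (hφ : ∀ x, (φ x).ofLp = ![σ x, (τ x).re, (τ x).im]) {x : K} (hx : IsIntegral ℚ x) :
    ‖φ x‖ ≤ √2 * mahlerMeasureAlg x := by
  have hσ : |σ x| ≤ mahlerMeasureAlg x := by
    simpa using norm_le_mahlerMeasureAlg hx (Complex.ofRealHom.comp σ)
  have hτ : ‖τ x‖ ≤ mahlerMeasureAlg x := norm_le_mahlerMeasureAlg hx τ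
  have hM0 : 0 ≤ mahlerMeasureAlg x := (abs_nonneg _).trans hσ
  have hσ2 : σ x ^ 2 ≤ mahlerMeasureAlg x ^ 2 := sq_le_sq' (abs_le.1 hσ).1 (abs_le.1 hσ).2
  have hτ2 : ‖τ x‖ ^ 2 ≤ mahlerMeasureAlg x ^ 2 := pow_le_pow_left₀ (norm_nonneg _) hτ 2
  refine le_sqrt_mul_of_sq_le_mul_sq hM0 ?_
  rw [EuclideanSpace.norm_sq_eq, Fin.sum_univ_three]
  simp [hφ]
  linarith [Complex.sq_norm_sub_sq_re (τ x)]

end Complex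

theorem stmt15_general (K : Type*) [Field K] [NumberField K]
    (b₂ b₃ : K)
    (hbasis : ∀ x : K, IsIntegral ℤ x ↔
      ∃ u v w : ℤ, x = (u : K) + (v : K) * b₂ + (w : K) * b₃)
    (φ : K → EuclideanSpace ℝ (Fin 3)) (f : ℝ)
    (hφ : (f = 3 ∧ (∀ v : InfinitePlace K, v.IsReal) ∧
            ∃ σ₁ σ₂ σ₃ : K →+* ℝ, σ₁ ≠ σ₂ ∧ σ₁ ≠ σ₃ ∧ σ₂ ≠ σ₃ ∧
              ∀ x : K, φ x = ![σ₁ x, σ₂ x, σ₃ x]) ∨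
          (f = 2 ∧ ¬ (∀ v : InfinitePlace K, v.IsReal) ∧
            ∃ (σ : K →+* ℝ) (τ : K →+* ℂ), (∃ x : K, (τ x).im ≠ 0) ∧
              ∀ x : K, φ x = ![σ x, (τ x).re, (τ x).im]))
    (β₁ β₂ β₃ : EuclideanSpace ℝ (Fin 3))
    (hβ₁ : β₁ = φ 1) (hβ₂ : β₂ = φ b₂) (hβ₃ : β₃ = φ b₃)
    (β₁s β₂s β₃s : EuclideanSpace ℝ (Fin 3)) (μ21 μ31 μ32 : ℝ)
    (hμ21 : μ21 = ⟪β₂, β₁s⟫ / ‖β₁s‖ ^ 2)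
    (hμ31 : μ31 = ⟪β₃, β₁s⟫ / ‖β₁s‖ ^ 2)
    (hμ32 : μ32 = ⟪β₃, β₂s⟫ / ‖β₂s‖ ^ 2)
    (hgs1 : β₁s = β₁)
    (hgs2 : β₂s = β₂ - μ21 • β₁s)
    (hgs3 : β₃s = β₃ - μ31 • β₁s - μ32 • β₂s)
    (hb21 : |μ21| ≤ 1/2) (hb31 : |μ31| ≤ 1/2) (hb32 : |μ32| ≤ 1/2)
    (a b c : ℤ) (α : K)
    (hα : α = (a : K) + (b : K) * b₂ + (c : K) * b₃)
    (C : ℝ) (hM : mahlerMeasureAlg α < C) :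
    |(c : ℝ)| ≤ Real.sqrt f * C / ‖β₃s‖ ∧
    |(b : ℝ)| ≤ Real.sqrt f * C / ‖β₂s‖ + (1/2) * (Real.sqrt f * C / ‖β₃s‖) ∧
    |(a : ℝ)| ≤ Real.sqrt f * C / ‖β₁s‖ + (1/2) * (Real.sqrt f * C / ‖β₂s‖) +
      (3/4) * (Real.sqrt f * C / ‖β₃s‖) := by
  obtain ⟨hadd, hspan, hnorm⟩ : (∀ x y, φ (x + y) = φ x + φ y) ∧ span ℝ (range φ) = ⊤ ∧
      ‖φ α‖ ≤ √f * mahlerMeasureAlg α := by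
    have hαint : IsIntegral ℚ α := Algebra.IsIntegral.isIntegral α
    rcases hφ with ⟨rfl, -, σ₁, σ₂, σ₃, h12, h13, h23, hφ⟩ | ⟨rfl, -, σ, τ, hτ, hφ⟩
    · exact ⟨map_add_of_totallyReal hφ, span_range_eq_top_of_totallyReal h12 h13 h23 hφ,
        norm_le_sqrt_three_mul_mahlerMeasureAlg hφ hαint⟩
    · exact ⟨map_add_of_complex hφ, span_range_eq_top_of_complex hτ hφ,
        norm_le_sqrt_two_mul_mahlerMeasureAlg hφ hαint⟩
  let g : K →+ EuclideanSpace ℝ (Fin 3) := AddMonoidHom.mk' φ hadd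
  have hbasis' : span ℚ (range ![1, b₂, b₃]) = ⊤ := by
    refine span_rat_eq_top_of_isIntegral_mem_span_int fun x hx => ?_
    obtain ⟨u, v, w, rfl⟩ := (hbasis x).1 hx
    exact (mem_span_range_iff_exists_fun ℤ).2
      ⟨![u, v, w], by simp [Fin.sum_univ_three, zsmul_eq_mul]⟩
  have hind : LinearIndependent ℝ ![β₁, β₂, β₃] := by
    have hcomp : g.toRatLinearMap ∘ ![1, b₂, b₃] = ![β₁, β₂, β₃] := by
      ext1 i; fin_cases i <;> simp [hβ₁, hβ₂, hβ₃, g]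
    simpa only [hcomp] using
      linearIndependent_comp_of_span_eq_top g.toRatLinearMap hbasis' hspan (by simp)
  have hφα : φ α = (a : ℝ) • β₁ + (b : ℝ) • β₂ + (c : ℝ) • β₃ := by
    have hsmul (n : ℤ) (x : K) : φ (n * x) = (n : ℝ) • φ x := by
      rw [← zsmul_eq_mul, Int.cast_smul_eq_zsmul]; exact map_zsmul g n x
    rw [hα, hadd, hadd, ← mul_one (a : K), hsmul, hsmul, hsmul, hβ₁, hβ₂, hβ₃]
  refine abs_coeffs_le_of_gramSchmidt hind hμ21 hμ31 hμ32 hgs1 hgs2 hgs3 hb21 hb31 hb32 ?_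
  rw [← hφα]
  exact hnorm.trans (mul_le_mul_of_nonneg_left hM.le (Real.sqrt_nonneg f))

/-- Let `K` be a cubic field with integral basis `{1, b₂, b₃}`, `φ : K → ℝ³` the
Minkowski embedding (given by the three real embeddings if `K` is totally real, and by
the real embedding together with real and imaginary parts of a complex embedding
otherwise), `βᵢ = φ(bᵢ)` with Gram–Schmidt orthogonalization `β₁*, β₂*, β₃*` whose
coefficients satisfy `|μᵢⱼ| ≤ 1/2`, and `f = 3` if `K` is totally real, `f = 2`
otherwise. If `α = a + b·b₂ + c·b₃ ∈ O_K` is nonzero with `a, b, c ∈ ℤ` and `M(α) < C`,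
then `|c| ≤ √f·C/‖β₃*‖`, `|b| ≤ √f·C/‖β₂*‖ + (1/2)·√f·C/‖β₃*‖`, and
`|a| ≤ √f·C/‖β₁*‖ + (1/2)·√f·C/‖β₂*‖ + (3/4)·√f·C/‖β₃*‖`. -/
theorem stmt15 (K : Type*) [Field K] [NumberField K]
    (hdeg : Module.finrank ℚ K = 3)
    (b₂ b₃ : K) (hb₂ : IsIntegral ℤ b₂) (hb₃ : IsIntegral ℤ b₃)
    (hbasis : ∀ x : K, IsIntegral ℤ x ↔
      ∃ u v w : ℤ, x = (u : K) + (v : K) * b₂ + (w : K) * b₃)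
    (φ : K → EuclideanSpace ℝ (Fin 3)) (f : ℝ)
    (hφ : (f = 3 ∧ (∀ v : InfinitePlace K, v.IsReal) ∧
            ∃ σ₁ σ₂ σ₃ : K →+* ℝ, σ₁ ≠ σ₂ ∧ σ₁ ≠ σ₃ ∧ σ₂ ≠ σ₃ ∧
              ∀ x : K, φ x = ![σ₁ x, σ₂ x, σ₃ x]) ∨
          (f = 2 ∧ ¬ (∀ v : InfinitePlace K, v.IsReal) ∧
            ∃ (σ : K →+* ℝ) (τ : K →+* ℂ), (∃ x : K, (τ x).im ≠ 0) ∧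
              ∀ x : K, φ x = ![σ x, (τ x).re, (τ x).im]))
    (β₁ β₂ β₃ : EuclideanSpace ℝ (Fin 3))
    (hβ₁ : β₁ = φ 1) (hβ₂ : β₂ = φ b₂) (hβ₃ : β₃ = φ b₃)
    (β₁s β₂s β₃s : EuclideanSpace ℝ (Fin 3)) (μ21 μ31 μ32 : ℝ)
    (hμ21 : μ21 = ⟪β₂, β₁s⟫ / ‖β₁s‖ ^ 2)
    (hμ31 : μ31 = ⟪β₃, β₁s⟫ / ‖β₁s‖ ^ 2)
    (hμ32 : μ32 = ⟪β₃, β₂s⟫ / ‖β₂s‖ ^ 2)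
    (hgs1 : β₁s = β₁)
    (hgs2 : β₂s = β₂ - μ21 • β₁s)
    (hgs3 : β₃s = β₃ - μ31 • β₁s - μ32 • β₂s)
    (hb21 : |μ21| ≤ 1/2) (hb31 : |μ31| ≤ 1/2) (hb32 : |μ32| ≤ 1/2)
    (a b c : ℤ) (α : K)
    (hα : α = (a : K) + (b : K) * b₂ + (c : K) * b₃) (hne : α ≠ 0)
    (C : ℝ) (hM : mahlerMeasureAlg α < C) :
    |(c : ℝ)| ≤ Real.sqrt f * C / ‖β₃s‖ ∧
    |(b : ℝ)| ≤ Real.sqrt f * C / ‖β₂s‖ + (1/2) * (Real.sqrt f * C / ‖β₃s‖) ∧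
    |(a : ℝ)| ≤ Real.sqrt f * C / ‖β₁s‖ + (1/2) * (Real.sqrt f * C / ‖β₂s‖) +
      (3/4) * (Real.sqrt f * C / ‖β₃s‖) :=
  stmt15_general K b₂ b₃ hbasis φ f hφ β₁ β₂ β₃ hβ₁ hβ₂ hβ₃ β₁s β₂s β₃s μ21 μ31 μ32 hμ21 hμ31 hμ32
    hgs1 hgs2 hgs3 hb21 hb31 hb32 a b c α hα C hM
end
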